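/- Let (I, f_{1,∞}) be an m-periodic non-autonomous system on the closed unit interval I = [0,1]. If (I, f_{1,∞}) is sensitive, then it is syndetically sensitive: there exists δ > 0 such that for every non-empty open U ⊆ I, the set N(U, δ) = {n : ∃ x, y ∈ U, |f_1^n(x) − f_1^n(y)| > δ} is syndetic (has bounded gaps). -/

import Mathlib

open Set Filter MeasureTheory TopologicalSpace

/-- `iterN f n = f_{n-1} ∘ ⋯ ∘ f_0`, the `n`-th iterate of the non-autonomous system. -/
def iterN {X : Type*} (f : ℕ → X → X) : ℕ → X → X
  | 0 => id
  | n + 1 => f n ∘ iterN f n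

/-- Topological transitivity of a non-autonomous system. -/
def NATransitive {X : Type*} [TopologicalSpace X] (f : ℕ → X → X) : Prop :=
  ∀ U V : Set X, IsOpen U → IsOpen V → U.Nonempty → V.Nonempty →
    ∃ n : ℕ, 0 < n ∧ (iterN f n '' U ∩ V).Nonempty

/-- Weak mixing (order 2). -/
def NAWeaklyMixing {X : Type*} [TopologicalSpace X] (f : ℕ → X → X) : Prop :=
  ∀ U₁ U₂ V₁ V₂ : Set X, IsOpen U₁ → IsOpen U₂ → IsOpen V₁ → IsOpen V₂ →
    U₁.Nonempty → U₂.Nonempty → V₁.Nonempty → V₂.Nonempty →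
    ∃ n : ℕ, 0 < n ∧ (iterN f n '' U₁ ∩ V₁).Nonempty ∧ (iterN f n '' U₂ ∩ V₂).Nonempty

/-- Weak mixing of order `m`. -/
def NAWeaklyMixingOrder {X : Type*} [TopologicalSpace X] (f : ℕ → X → X) (m : ℕ) : Prop :=
  ∀ U V : Fin m → Set X, (∀ i, IsOpen (U i)) → (∀ i, IsOpen (V i)) →
    (∀ i, (U i).Nonempty) → (∀ i, (V i).Nonempty) →
    ∃ n : ℕ, 0 < n ∧ ∀ i, (iterN f n '' U i ∩ V i).Nonempty

/-- Banks's condition. -/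
def NABanks {X : Type*} [TopologicalSpace X] (f : ℕ → X → X) : Prop :=
  ∀ U V W : Set X, IsOpen U → IsOpen V → IsOpen W →
    U.Nonempty → V.Nonempty → W.Nonempty →
    ∃ n : ℕ, 0 < n ∧ (iterN f n '' U ∩ V).Nonempty ∧ (iterN f n '' U ∩ W).Nonempty

/-- Topological mixing. -/
def NAMixing {X : Type*} [TopologicalSpace X] (f : ℕ → X → X) : Prop :=
  ∀ U V : Set X, IsOpen U → IsOpen V → U.Nonempty → V.Nonempty →
    ∃ N : ℕ, ∀ n ≥ N, (iterN f n '' U ∩ V).Nonempty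

/-- `blockC f s k = f_{s+k-1} ∘ ⋯ ∘ f_s`. -/
def blockC {X : Type*} (f : ℕ → X → X) (s k : ℕ) : X → X :=
  iterN (fun i => f (s + i)) k

/-- The `k`-th iterate system `f_{1,∞}^{[k]}`. -/
def kthSys {X : Type*} (f : ℕ → X → X) (k : ℕ) : ℕ → X → X :=
  fun n => blockC f (n * k) k

/-- The induced non-autonomous system on Borel probability measures (pushforwards). -/
noncomputable def inducedM {X : Type*} [MeasurableSpace X] [TopologicalSpace X]
    [BorelSpace X] (f : ℕ → X → X) (hf : ∀ n, Continuous (f n)) :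
    ℕ → ProbabilityMeasure X → ProbabilityMeasure X :=
  fun n μ => μ.map ((hf n).measurable.aemeasurable)

/-- The induced non-autonomous system on the hyperspace of non-empty compact subsets. -/
def inducedK {X : Type*} [TopologicalSpace X] (f : ℕ → X → X) (hf : ∀ n, Continuous (f n)) :
    ℕ → NonemptyCompacts X → NonemptyCompacts X :=
  fun n K => ⟨⟨f n '' (K : Set X), K.isCompact.image (hf n)⟩, K.nonempty.image _⟩

/-- The set `N(U, δ)` of sensitivity times. -/
def NSet {X : Type*} [PseudoMetricSpace X] (f : ℕ → X → X) (U : Set X) (δ : ℝ) : Set ℕ :=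
  {n | 0 < n ∧ ∃ x ∈ U, ∃ y ∈ U, δ < dist (iterN f n x) (iterN f n y)}

/-- Sensitive dependence on initial conditions. -/
def NASensitive {X : Type*} [PseudoMetricSpace X] (f : ℕ → X → X) : Prop :=
  ∃ δ : ℝ, 0 < δ ∧ ∀ x : X, ∀ U : Set X, IsOpen U → x ∈ U →
    ∃ y ∈ U, ∃ n : ℕ, 0 < n ∧ δ < dist (iterN f n x) (iterN f n y)

/-- A thick subset of ℕ. -/
def ThickSet (S : Set ℕ) : Prop := ∀ p : ℕ, ∃ n : ℕ, ∀ j ≤ p, n + j ∈ S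

/-- A syndetic subset of ℕ. -/
def SyndeticSet (S : Set ℕ) : Prop := ∃ a : ℕ, ∀ i : ℕ, ∃ j, i ≤ j ∧ j ≤ i + a ∧ j ∈ S

/-- Upper density of a subset of ℕ. -/
noncomputable def upperDens (S : Set ℕ) : ℝ :=
  Filter.limsup (fun n : ℕ => (Nat.card ↥(S ∩ Set.Iio n) : ℝ) / n) Filter.atTop

/-- Periodic point of a non-autonomous system. -/
def NAPeriodicPt {X : Type*} (f : ℕ → X → X) (x : X) : Prop :=
  ∃ n : ℕ, 0 < n ∧ ∀ k : ℕ, 0 < k → iterN f (n * k) x = x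

/-!
Write `g = f_{m-1} ∘ ⋯ ∘ f_0`, so that `f_1^{mq+r} = f_1^r ∘ g^q`. The finitely many maps
`f_1^r`, `r < m`, are equicontinuous, so sensitivity of the system passes to `g`.

For the continuous sensitive interval map `g`, cut `[0,1]` into `k` cells of length `1/k`
smaller than half the sensitivity constant `δ`. The image of an open interval under a suitable
iterate has length `> δ`, hence covers a whole cell. Every cell thus covers some cell under a
positive iterate, and finiteness produces a cell `W` with `W ⊆ g^P(W)`, `P > 0`, reachable from
any open interval `V` as `W ⊆ g^N(V)`. Two points of `W` that `g^q` separates have preimages in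
`V` under every `g^{N + Pt}`, so `N(V, δ)` contains the progression `q + N + Pt`. Finally
`n ↦ mn` carries syndetic sets of times of `g` to syndetic sets of times of the system.
-/

open Function

section IterN

variable {X : Type*}

theorem iterN_const (g : X → X) (n : ℕ) : iterN (fun _ => g) n = g^[n] := by
  induction n with
  | zero => rfl
  | succ n ih => rw [iterN, ih, iterate_succ']

theorem iterN_add (f : ℕ → X → X) (n k : ℕ) :
    iterN f (n + k) = iterN (fun i => f (n + i)) k ∘ iterN f n := by
  induction k with
  | zero => rfl
  | succ k ih => rw [← add_assoc, iterN, ih, iterN, comp_assoc]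

theorem continuous_iterN [TopologicalSpace X] {f : ℕ → X → X} (hf : ∀ n, Continuous (f n))
    (n : ℕ) : Continuous (iterN f n) := by
  induction n with
  | zero => exact continuous_id
  | succ n ih => exact (hf n).comp ih

theorem Function.Periodic.iterN_mul_add {f : ℕ → X → X} {m : ℕ} (hf : Periodic f m)
    (q r : ℕ) : iterN f (m * q + r) = iterN f r ∘ (iterN f m)^[q] := by
  have hshift : ∀ q, (fun i => f (m * q + i)) = f := fun q =>
    funext fun i => by simpa [add_comm, mul_comm] using hf.nat_mul q i
  have hmul : ∀ q, iterN f (m * q) = (iterN f m)^[q] := by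
    intro q
    induction q with
    | zero => rfl
    | succ q ih => rw [mul_add_one, iterN_add, hshift, ih, iterate_succ']
  rw [iterN_add, hshift, hmul]

theorem Function.Periodic.iterN_mul {f : ℕ → X → X} {m : ℕ} (hf : Periodic f m) (q : ℕ) :
    iterN f (m * q) = (iterN f m)^[q] :=
  hf.iterN_mul_add q 0

end IterN

section Syndetic

variable {S T : Set ℕ}

theorem SyndeticSet.mono (hS : SyndeticSet S) (hST : S ⊆ T) : SyndeticSet T := by
  obtain ⟨a, ha⟩ := hS
  exact ⟨a, fun i => (ha i).imp fun _ ⟨hij, hja, hjS⟩ => ⟨hij, hja, hST hjS⟩⟩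

theorem syndeticSet_of_forall_add_mul_mem {a P : ℕ} (hP : 0 < P) (h : ∀ t, a + P * t ∈ S) :
    SyndeticSet S := by
  refine ⟨a + P, fun i => ⟨a + P * (i / P + 1), ?_, ?_, h _⟩⟩
  · linarith [Nat.lt_mul_div_succ i hP]
  · linarith [Nat.mul_div_le i P]

theorem SyndeticSet.image_mul_left {m : ℕ} (hm : 0 < m) (hS : SyndeticSet S) :
    SyndeticSet ((m * ·) '' S) := by
  obtain ⟨a, ha⟩ := hS
  refine ⟨m * (a + 1), fun i => ?_⟩
  obtain ⟨j, hij, hja, hjS⟩ := ha (i / m + 1)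
  refine ⟨m * j, ?_, ?_, mem_image_of_mem _ hjS⟩
  · nlinarith [Nat.lt_mul_div_succ i hm]
  · nlinarith [Nat.mul_div_le i m]

end Syndetic

def NASyndeticallySensitive {X : Type*} [PseudoMetricSpace X] (f : ℕ → X → X) : Prop :=
  ∃ δ : ℝ, 0 < δ ∧ ∀ U : Set X, IsOpen U → U.Nonempty → SyndeticSet (NSet f U δ)

def IterateCovers {X : Type*} (g : X → X) (A B : Set X) : Prop :=
  ∃ t, 0 < t ∧ SurjOn g^[t] A B

theorem IterateCovers.trans {X : Type*} {g : X → X} {A B C : Set X}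
    (hAB : IterateCovers g A B) (hBC : IterateCovers g B C) : IterateCovers g A C := by
  obtain ⟨t, ht, hAB⟩ := hAB
  obtain ⟨s, hs, hBC⟩ := hBC
  exact ⟨s + t, by omega, by rw [iterate_add]; exact hBC.comp hAB⟩

theorem exists_rel_self_of_forall_exists_rel {α : Type*} [Finite α] {r : α → α → Prop}
    (htrans : ∀ {a b c}, r a b → r b c → r a c) (h : ∀ a, ∃ b, r a b) (a : α) :
    ∃ b, r a b ∧ r b b := by
  choose s hs using h
  have chain : ∀ i j, i < j → r (s^[i] a) (s^[j] a) := by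
    intro i j hij
    induction hij with
    | refl => rw [iterate_succ_apply']; exact hs _
    | step _ ih => rw [iterate_succ_apply']; exact htrans ih (hs _)
  obtain ⟨i, j, hne, heq⟩ := Finite.exists_ne_map_eq_of_infinite fun n => s^[n + 1] a
  wlog hij : i < j generalizing i j
  · exact this j i hne.symm heq.symm (hne.lt_or_gt.resolve_left hij)
  exact ⟨s^[i + 1] a, chain 0 (i + 1) (by omega), heq ▸ chain (i + 1) (j + 1) (by omega)⟩

section MetricSpace

variable {X : Type*} [PseudoMetricSpace X]

theorem NSet_mono {f : ℕ → X → X} {U V : Set X} (hVU : V ⊆ U) (δ : ℝ) :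
    NSet f V δ ⊆ NSet f U δ :=
  fun _ ⟨hn, x, hx, y, hy, hxy⟩ => ⟨hn, x, hVU hx, y, hVU hy, hxy⟩

theorem exists_pos_forall_dist_lt_of_uniformContinuous {ι Y : Type*} [Fintype ι]
    [PseudoMetricSpace Y] {F : ι → X → Y} (hF : ∀ i, UniformContinuous (F i)) {δ : ℝ}
    (hδ : 0 < δ) : ∃ ε > 0, ∀ a b, dist a b < ε → ∀ i, dist (F i a) (F i b) < δ := by
  obtain ⟨ε, hε, hF⟩ := Metric.uniformContinuous_iff.mp (uniformContinuous_pi.mpr hF) δ hδ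
  exact ⟨ε, hε, fun a b hab i => (dist_le_pi_dist _ _ i).trans_lt (hF hab)⟩

theorem NASensitive.iterN_of_periodic [CompactSpace X] {f : ℕ → X → X}
    (hf : ∀ n, Continuous (f n)) {m : ℕ} (hm : 0 < m) (hper : Periodic f m)
    (h : NASensitive f) : NASensitive fun _ => iterN f m := by
  obtain ⟨δ, hδ, hsens⟩ := h
  obtain ⟨ε, hε, hmod⟩ := exists_pos_forall_dist_lt_of_uniformContinuous
    (F := fun r : Fin m => iterN f r)
    (fun r => CompactSpace.uniformContinuous_of_continuous (continuous_iterN hf r)) hδ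
  refine ⟨ε / 2, half_pos hε, fun x U hU hx => ?_⟩
  obtain ⟨y, ⟨hyU, hyx⟩, n, -, hxy⟩ :=
    hsens x (U ∩ Metric.ball x ε) (hU.inter Metric.isOpen_ball) ⟨hx, Metric.mem_ball_self hε⟩
  have hfar : ε ≤ dist ((iterN f m)^[n / m] x) ((iterN f m)^[n / m] y) := by
    by_contra! hnear
    have := hmod _ _ hnear ⟨n % m, Nat.mod_lt n hm⟩
    simp only [← comp_apply (f := iterN f (n % m)), ← hper.iterN_mul_add,
      Nat.div_add_mod] at this
    linarith
  have hq : n / m ≠ 0 := by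
    intro h0
    rw [h0, iterate_zero_apply, iterate_zero_apply, dist_comm] at hfar
    exact (Metric.mem_ball.mp hyx).not_ge hfar
  exact ⟨y, hyU, n / m, Nat.pos_of_ne_zero hq, by rw [iterN_const]; linarith⟩

theorem NASyndeticallySensitive.of_iterN_of_periodic {f : ℕ → X → X} {m : ℕ} (hm : 0 < m)
    (hper : Periodic f m) (h : NASyndeticallySensitive fun _ => iterN f m) :
    NASyndeticallySensitive f := by
  obtain ⟨δ, hδ, hsyn⟩ := h
  refine ⟨δ, hδ, fun U hU hne => ((hsyn U hU hne).image_mul_left hm).mono ?_⟩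
  rintro _ ⟨q, ⟨hq, x, hx, y, hy, hxy⟩, rfl⟩
  refine ⟨Nat.mul_pos hm hq, x, hx, y, hy, ?_⟩
  rwa [hper.iterN_mul, ← iterN_const]

theorem syndeticSet_NSet_of_iterateCovers {g : X → X} {V W : Set X} (hVW : IterateCovers g V W)
    (hWW : IterateCovers g W W) {x y : X} (hx : x ∈ W) (hy : y ∈ W) {q : ℕ} (hq : 0 < q)
    {δ : ℝ} (hxy : δ < dist (g^[q] x) (g^[q] y)) : SyndeticSet (NSet (fun _ => g) V δ) := by
  obtain ⟨N, -, hN⟩ := hVW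
  obtain ⟨P, hP, hPW⟩ := hWW
  refine syndeticSet_of_forall_add_mul_mem (a := q + N) hP fun t => ?_
  have hcov : SurjOn g^[P * t + N] V W := by
    rw [iterate_add, iterate_mul]
    exact (hPW.iterate t).comp hN
  obtain ⟨u, hu, rfl⟩ := hcov hx
  obtain ⟨v, hv, rfl⟩ := hcov hy
  have hsplit : ∀ z, g^[q + N + P * t] z = g^[q] (g^[P * t + N] z) := fun z => by
    rw [← iterate_add_apply, show q + (P * t + N) = q + N + P * t by ring]
  exact ⟨by omega, u, hu, v, hv, by rwa [iterN_const, hsplit, hsplit]⟩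

end MetricSpace

namespace unitInterval

def gridCell (k : ℕ) (i : Fin k) : Set unitInterval :=
  Subtype.val ⁻¹' Ioo ((i : ℝ) / k) ((i + 1 : ℝ) / k)

theorem isOpen_gridCell (k : ℕ) (i : Fin k) : IsOpen (gridCell k i) :=
  isOpen_Ioo.preimage continuous_subtype_val

theorem isPreconnected_gridCell (k : ℕ) (i : Fin k) : IsPreconnected (gridCell k i) :=
  (ordConnected_Ioo.preimage_mono (Subtype.mono_coe _)).isPreconnected

theorem gridCell_nonempty {k : ℕ} (i : Fin k) : (gridCell k i).Nonempty := by
  have hk : (0 : ℝ) < k := by exact_mod_cast i.pos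
  have hik : (i : ℝ) + 1 ≤ k := by exact_mod_cast i.isLt
  refine ⟨⟨(i + 1 / 2) / k, by positivity, (div_le_one hk).mpr (by linarith)⟩, ?_, ?_⟩
  · exact div_lt_div_of_pos_right (by linarith) hk
  · exact div_lt_div_of_pos_right (by linarith) hk

theorem isPreconnected_ball (x : unitInterval) (r : ℝ) : IsPreconnected (Metric.ball x r) := by
  have hball : Metric.ball x r = Subtype.val ⁻¹' Ioo ((x : ℝ) - r) (x + r) := by
    rw [← Real.ball_eq_Ioo]
    rfl
  rw [hball]
  exact (ordConnected_Ioo.preimage_mono (Subtype.mono_coe _)).isPreconnected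

theorem exists_gridCell_subset {k : ℕ} {S : Set unitInterval} (hS : IsPreconnected S)
    {a b : unitInterval} (ha : a ∈ S) (hb : b ∈ S) (hab : 2 < k * dist a b) :
    ∃ i : Fin k, gridCell k i ⊆ S := by
  wlog hle : a ≤ b generalizing a b
  · exact this hb ha (by rwa [dist_comm]) (le_of_not_ge hle)
  have hdist : dist a b = (b : ℝ) - a := by
    rw [Subtype.dist_eq, Real.dist_eq, abs_sub_comm,
      abs_of_nonneg (sub_nonneg.mpr (Subtype.coe_le_coe.mpr hle))]
  rw [hdist] at hab
  have hk : (0 : ℝ) < k := by nlinarith [b.2.2, a.2.1]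
  set i := ⌈(a : ℝ) * k⌉₊
  have hai : (a : ℝ) * k ≤ i := Nat.le_ceil _
  have hia : (i : ℝ) < a * k + 1 := Nat.ceil_lt_add_one (by nlinarith [a.2.1])
  have hik : (i : ℝ) + 1 < k := by nlinarith [b.2.2]
  refine ⟨⟨i, by exact_mod_cast (lt_add_one _).trans hik⟩, fun z ⟨hz₁, hz₂⟩ => ?_⟩
  rw [div_lt_iff₀ hk] at hz₁
  rw [lt_div_iff₀ hk] at hz₂
  refine hS.Icc_subset ha hb ⟨?_, ?_⟩
  · show (a : ℝ) ≤ z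
    nlinarith
  · show (z : ℝ) ≤ b
    nlinarith

theorem exists_gridCell_iterateCovers {g : unitInterval → unitInterval} (hg : Continuous g)
    {δ : ℝ} (hsens : ∀ x U, IsOpen U → x ∈ U → ∃ y ∈ U, ∃ n, 0 < n ∧
      δ < dist (g^[n] x) (g^[n] y))
    {k : ℕ} (hk : 2 < k * δ) {V : Set unitInterval} (hVo : IsOpen V) (hVc : IsPreconnected V)
    (hVne : V.Nonempty) : ∃ i : Fin k, IterateCovers g V (gridCell k i) := by
  obtain ⟨x, hx⟩ := hVne
  obtain ⟨y, hy, t, ht, hxy⟩ := hsens x V hVo hx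
  obtain ⟨i, hi⟩ := exists_gridCell_subset (hVc.image _ (hg.iterate t).continuousOn)
    (mem_image_of_mem _ hx) (mem_image_of_mem _ hy)
    (hk.trans_le (mul_le_mul_of_nonneg_left hxy.le k.cast_nonneg))
  exact ⟨i, t, ht, hi⟩

theorem naSyndeticallySensitive_const {g : unitInterval → unitInterval}
    (hg : Continuous g) (h : NASensitive fun _ => g) : NASyndeticallySensitive fun _ => g := by
  obtain ⟨δ, hδ, hsens⟩ := h
  simp only [iterN_const] at hsens
  obtain ⟨k, hk⟩ : ∃ k : ℕ, 2 < k * δ := by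
    obtain ⟨k, hk⟩ := exists_nat_gt (2 / δ)
    exact ⟨k, (div_lt_iff₀ hδ).mp hk⟩
  have hcells : ∀ i : Fin k, ∃ j, IterateCovers g (gridCell k i) (gridCell k j) := fun i =>
    exists_gridCell_iterateCovers hg hsens hk (isOpen_gridCell k i)
      (isPreconnected_gridCell k i) (gridCell_nonempty i)
  refine ⟨δ, hδ, fun U hU ⟨x, hx⟩ => ?_⟩
  obtain ⟨r, hr, hrU⟩ := Metric.isOpen_iff.mp hU x hx
  obtain ⟨i, hVi⟩ := exists_gridCell_iterateCovers hg hsens hk Metric.isOpen_ball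
    (isPreconnected_ball x r) ⟨x, Metric.mem_ball_self hr⟩
  obtain ⟨j, hij, hjj⟩ := exists_rel_self_of_forall_exists_rel
    (r := fun i j => IterateCovers g (gridCell k i) (gridCell k j)) IterateCovers.trans hcells i
  obtain ⟨u, hu⟩ := gridCell_nonempty j
  obtain ⟨v, hv, q, hq, huv⟩ := hsens u _ (isOpen_gridCell k j) hu
  exact (syndeticSet_NSet_of_iterateCovers (hVi.trans hij) hjj hu hv hq huv).mono
    (NSet_mono hrU δ)

end unitInterval

/-- an `m`-periodic sensitive non-autonomous system on `[0,1]` is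
syndetically sensitive. -/
theorem periodic_interval_sensitive_implies_syndetically_sensitive
    (f : ℕ → unitInterval → unitInterval) (hf : ∀ n, Continuous (f n)) (m : ℕ)
    (hm : 0 < m) (hper : ∀ n, f (n + m) = f n) (h : NASensitive f) :
    ∃ δ : ℝ, 0 < δ ∧ ∀ U : Set unitInterval, IsOpen U → U.Nonempty →
      SyndeticSet (NSet f U δ) :=
  NASyndeticallySensitive.of_iterN_of_periodic hm hper <|
    unitInterval.naSyndeticallySensitive_const (continuous_iterN hf m)
      (h.iterN_of_periodic hf hm hper)
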